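/- arXiv:2401.11288 — 2 statements merged into one kernel-verified Lean document; each statement's English description precedes it below -/
import Mathlib

section
/- Let X be a metric space, let μ₊ and μ₋ be Borel probability measures on X, and let f, g : X → ℝ be Lipschitz functions with Lipschitz constants l_f and l_g respectively, taking values in [0, 1], with f·g integrable with respect to both μ₊ and μ₋. Assume the equal base rate condition: ∫ g dμ₊ = ∫ g dμ₋ = p for some real p > 0. Then for every coupling π of μ₊ and μ₋ for which the distance function is integrable, the equal opportunity gap satisfies |(∫ f·g dμ₊)/p − (∫ f·g dμ₋)/p| ≤ ((l_f + l_g)/p) · ∫ dist(x, y) dπ(x, y). Consequently, the equal opportunity gap of f is bounded by (l_f + l_g)/p times the 1-Wasserstein distance between μ₊ and μ₋. -/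
open MeasureTheory
open scoped NNReal

/-- Equal-opportunity half of Proposition 1: under the equal base rate
condition `∫ g ∂μp = ∫ g ∂μm = p > 0`, the EO gap of a `[0,1]`-valued
Lipschitz decision model `f` (w.r.t. the `[0,1]`-valued Lipschitz ground-truth
label model `g`) is bounded by `(lf + lg)/p` times the transport cost of any
coupling, hence by `(lf + lg)/p` times the 1-Wasserstein distance. -/
theorem eo_gap_le_sum_lipschitz_div_base_rate_mul_coupling_cost
    {X : Type*} [MetricSpace X] [MeasurableSpace X] [BorelSpace X]
    (μp μm : Measure X) [IsProbabilityMeasure μp] [IsProbabilityMeasure μm]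
    (f g : X → ℝ) (lf lg : ℝ≥0)
    (hf : LipschitzWith lf f) (hg : LipschitzWith lg g)
    (hf0 : ∀ x, 0 ≤ f x) (hf1 : ∀ x, f x ≤ 1)
    (hg0 : ∀ x, 0 ≤ g x) (hg1 : ∀ x, g x ≤ 1)
    (hfgp : Integrable (fun x => f x * g x) μp)
    (hfgm : Integrable (fun x => f x * g x) μm)
    (p : ℝ) (hp : 0 < p)
    (hbasep : ∫ x, g x ∂μp = p) (hbasem : ∫ x, g x ∂μm = p)
    (π : Measure (X × X)) [IsProbabilityMeasure π]
    (hπ1 : π.map Prod.fst = μp) (hπ2 : π.map Prod.snd = μm)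
    (hdist : Integrable (fun q : X × X => dist q.1 q.2) π) :
    |(∫ x, f x * g x ∂μp) / p - (∫ x, f x * g x ∂μm) / p| ≤
      (((lf : ℝ) + (lg : ℝ)) / p) * ∫ q : X × X, dist q.1 q.2 ∂π := by
  set h : X → ℝ := fun x => f x * g x with hh
  have hcont : Continuous h := (hf.continuous.mul hg.continuous)
  -- pointwise Lipschitz-type bound for h
  have hkey : ∀ x y : X, |h x - h y| ≤ ((lf : ℝ) + lg) * dist x y := by
    intro x y
    have h1 : h x - h y = (f x - f y) * g x + f y * (g x - g y) := by ring
    calc |h x - h y| ≤ |(f x - f y) * g x| + |f y * (g x - g y)| := by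
          rw [h1]; exact abs_add_le _ _
      _ = |f x - f y| * |g x| + |f y| * |g x - g y| := by rw [abs_mul, abs_mul]
      _ ≤ ((lf : ℝ) * dist x y) * 1 + 1 * ((lg : ℝ) * dist x y) := by
          gcongr
          · exact hf.dist_le_mul x y |>.trans_eq' (Real.dist_eq _ _).symm
          · rw [abs_of_nonneg (hg0 x)]; exact hg1 x
          · rw [abs_of_nonneg (hf0 y)]; exact hf1 y
          · exact hg.dist_le_mul x y |>.trans_eq' (Real.dist_eq _ _).symm
      _ = ((lf : ℝ) + lg) * dist x y := by ring
  have hmfst : Integrable (fun q : X × X => h q.1) π := by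
    refine Integrable.mono' (integrable_const 1)
      ((hcont.measurable.comp measurable_fst).aestronglyMeasurable) ?_
    filter_upwards with q
    rw [Real.norm_eq_abs, abs_of_nonneg (mul_nonneg (hf0 _) (hg0 _))]
    exact mul_le_one₀ (hf1 _) (hg0 _) (hg1 _)
  have hmsnd : Integrable (fun q : X × X => h q.2) π := by
    refine Integrable.mono' (integrable_const 1)
      ((hcont.measurable.comp measurable_snd).aestronglyMeasurable) ?_
    filter_upwards with q
    rw [Real.norm_eq_abs, abs_of_nonneg (mul_nonneg (hf0 _) (hg0 _))]
    exact mul_le_one₀ (hf1 _) (hg0 _) (hg1 _)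
  have hip : ∫ x, h x ∂μp = ∫ q : X × X, h q.1 ∂π := by
    rw [← hπ1, integral_map measurable_fst.aemeasurable hcont.aestronglyMeasurable]
  have him : ∫ x, h x ∂μm = ∫ q : X × X, h q.2 ∂π := by
    rw [← hπ2, integral_map measurable_snd.aemeasurable hcont.aestronglyMeasurable]
  have hmain : |(∫ x, h x ∂μp) - ∫ x, h x ∂μm| ≤
      ((lf : ℝ) + lg) * ∫ q : X × X, dist q.1 q.2 ∂π := by
    rw [hip, him, ← integral_sub hmfst hmsnd]
    calc |∫ q : X × X, (h q.1 - h q.2) ∂π| ≤ ∫ q : X × X, |h q.1 - h q.2| ∂π :=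
          by simpa [Real.norm_eq_abs] using norm_integral_le_integral_norm (fun q : X × X => h q.1 - h q.2)
      _ ≤ ∫ q : X × X, ((lf : ℝ) + lg) * dist q.1 q.2 ∂π := by
          refine integral_mono ((hmfst.sub hmsnd).abs) (hdist.const_mul _) ?_
          intro q; exact hkey q.1 q.2
      _ = ((lf : ℝ) + lg) * ∫ q : X × X, dist q.1 q.2 ∂π := integral_const_mul _ _
  rw [div_sub_div_same, abs_div, abs_of_pos hp, div_mul_eq_mul_div]
  gcongr
end

section
/- Let X be a metric space, let μ₊ and μ₋ be Borel probability measures on X, and let f, g : X → ℝ be Lipschitz functions with Lipschitz constants l_f and l_g respectively, taking values in [0, 1], with f and f·g integrable with respect to both μ₊ and μ₋, and assume the equal base rate condition ∫ g dμ₊ = ∫ g dμ₋ = p for some real p > 0. Then for every coupling π of μ₊ and μ₋ with d = ∫ dist(x, y) dπ(x, y) finite, BOTH fairness gaps are simultaneously controlled: the demographic parity gap satisfies |∫ f dμ₊ − ∫ f dμ₋| ≤ l_f · d, and the equal opportunity gap satisfies |(∫ f·g dμ₊)/p − (∫ f·g dμ₋)/p| ≤ ((l_f + l_g)/p) · d.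 In particular, if μ₊ = μ₋ (so that the 1-Wasserstein distance is 0), then the demographic parity gap and the equal opportunity gap of f are both exactly 0. -/
open MeasureTheory
open scoped NNReal

lemma coupling_integral_abs_diff_le
    {X : Type*} [MetricSpace X] [MeasurableSpace X] [BorelSpace X]
    (μp μm : Measure X) [IsProbabilityMeasure μp] [IsProbabilityMeasure μm]
    (π : Measure (X × X)) [IsProbabilityMeasure π]
    (hπ1 : π.map Prod.fst = μp) (hπ2 : π.map Prod.snd = μm)
    (hdist : Integrable (fun q : X × X => dist q.1 q.2) π)
    (h : X → ℝ) (L : ℝ) (hL : 0 ≤ L)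
    (hlip : ∀ x y, |h x - h y| ≤ L * dist x y)
    (hcont : Continuous h)
    (hip : Integrable h μp) (him : Integrable h μm) :
    |(∫ x, h x ∂μp) - ∫ x, h x ∂μm| ≤ L * ∫ q : X × X, dist q.1 q.2 ∂π := by
  have h1 : Integrable (fun q : X × X => h q.1) π := by
    rw [← hπ1] at hip
    exact (integrable_map_measure hcont.aestronglyMeasurable
      measurable_fst.aemeasurable).mp hip
  have h2 : Integrable (fun q : X × X => h q.2) π := by
    rw [← hπ2] at him
    exact (integrable_map_measure hcont.aestronglyMeasurable
      measurable_snd.aemeasurable).mp him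
  have e1 : ∫ x, h x ∂μp = ∫ q : X × X, h q.1 ∂π := by
    rw [← hπ1, integral_map measurable_fst.aemeasurable hcont.aestronglyMeasurable]
  have e2 : ∫ x, h x ∂μm = ∫ q : X × X, h q.2 ∂π := by
    rw [← hπ2, integral_map measurable_snd.aemeasurable hcont.aestronglyMeasurable]
  rw [e1, e2, ← integral_sub h1 h2]
  calc |∫ q : X × X, (h q.1 - h q.2) ∂π|
      ≤ ∫ q : X × X, |h q.1 - h q.2| ∂π := by
        simpa [Real.norm_eq_abs] using
          norm_integral_le_integral_norm (μ := π) (fun q : X × X => h q.1 - h q.2)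
    _ ≤ ∫ q : X × X, L * dist q.1 q.2 ∂π :=
        integral_mono (h1.sub h2).abs (hdist.const_mul L) (fun q => hlip q.1 q.2)
    _ = L * ∫ q : X × X, dist q.1 q.2 ∂π := integral_const_mul L _

/-- Full Proposition 1 together with the reconciliation claim: for a
`[0,1]`-valued Lipschitz decision model `f` and ground-truth label model `g`
with equal base rates `p > 0`, any coupling `π` of the group feature
distributions with transport cost `d = ∫ dist dπ` simultaneously bounds the
demographic parity gap by `lf · d` and the equal opportunity gap by
`((lf + lg)/p) · d`; in particular, if the two group distributions coincide
(1-Wasserstein distance zero), both gaps vanish. -/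
theorem dp_and_eo_gap_bounds_and_reconciliation
    {X : Type*} [MetricSpace X] [MeasurableSpace X] [BorelSpace X]
    (μp μm : Measure X) [IsProbabilityMeasure μp] [IsProbabilityMeasure μm]
    (f g : X → ℝ) (lf lg : ℝ≥0)
    (hf : LipschitzWith lf f) (hg : LipschitzWith lg g)
    (hf0 : ∀ x, 0 ≤ f x) (hf1 : ∀ x, f x ≤ 1)
    (hg0 : ∀ x, 0 ≤ g x) (hg1 : ∀ x, g x ≤ 1)
    (hfp : Integrable f μp) (hfm : Integrable f μm)
    (hfgp : Integrable (fun x => f x * g x) μp)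
    (hfgm : Integrable (fun x => f x * g x) μm)
    (p : ℝ) (hp : 0 < p)
    (hbasep : ∫ x, g x ∂μp = p) (hbasem : ∫ x, g x ∂μm = p)
    (π : Measure (X × X)) [IsProbabilityMeasure π]
    (hπ1 : π.map Prod.fst = μp) (hπ2 : π.map Prod.snd = μm)
    (hdist : Integrable (fun q : X × X => dist q.1 q.2) π) :
    (|(∫ x, f x ∂μp) - ∫ x, f x ∂μm| ≤
        (lf : ℝ) * ∫ q : X × X, dist q.1 q.2 ∂π) ∧
    (|(∫ x, f x * g x ∂μp) / p - (∫ x, f x * g x ∂μm) / p| ≤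
        (((lf : ℝ) + (lg : ℝ)) / p) * ∫ q : X × X, dist q.1 q.2 ∂π) ∧
    (μp = μm →
      |(∫ x, f x ∂μp) - ∫ x, f x ∂μm| = 0 ∧
      |(∫ x, f x * g x ∂μp) / p - (∫ x, f x * g x ∂μm) / p| = 0) := by
  have hflip : ∀ x y, |f x - f y| ≤ (lf : ℝ) * dist x y := fun x y => by
    have := hf.dist_le_mul x y
    rwa [Real.dist_eq] at this
  have hglip : ∀ x y, |g x - g y| ≤ (lg : ℝ) * dist x y := fun x y => by
    have := hg.dist_le_mul x y
    rwa [Real.dist_eq] at this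
  have hfglip : ∀ x y, |f x * g x - f y * g y| ≤ ((lf : ℝ) + (lg : ℝ)) * dist x y := by
    intro x y
    have key : f x * g x - f y * g y = f x * (g x - g y) + (f x - f y) * g y := by ring
    calc |f x * g x - f y * g y|
        ≤ |f x * (g x - g y)| + |(f x - f y) * g y| := by
          rw [key]; exact abs_add_le _ _
      _ = |f x| * |g x - g y| + |f x - f y| * |g y| := by rw [abs_mul, abs_mul]
      _ ≤ 1 * ((lg : ℝ) * dist x y) + ((lf : ℝ) * dist x y) * 1 :=
          add_le_add
            (mul_le_mul (by rw [abs_of_nonneg (hf0 x)]; exact hf1 x) (hglip x y)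
              (abs_nonneg _) zero_le_one)
            (mul_le_mul (hflip x y) (by rw [abs_of_nonneg (hg0 y)]; exact hg1 y)
              (abs_nonneg _) (by positivity))
      _ = ((lf : ℝ) + (lg : ℝ)) * dist x y := by ring
  have hdp := coupling_integral_abs_diff_le μp μm π hπ1 hπ2 hdist f (lf : ℝ)
    lf.coe_nonneg hflip hf.continuous hfp hfm
  have hfg := coupling_integral_abs_diff_le μp μm π hπ1 hπ2 hdist
    (fun x => f x * g x) ((lf : ℝ) + (lg : ℝ))
    (by positivity) hfglip (hf.continuous.mul hg.continuous) hfgp hfgm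
  have hdnn : 0 ≤ ∫ q : X × X, dist q.1 q.2 ∂π :=
    integral_nonneg fun q => dist_nonneg
  refine ⟨hdp, ?_, ?_⟩
  · rw [div_sub_div_same, abs_div, abs_of_pos hp, div_mul_eq_mul_div,
      div_le_div_iff_of_pos_right hp]
    exact hfg
  · rintro rfl
    simp
end
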